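/- Let X be an m×n matrix of independent indeterminates over a field K equipped with a diagonal monomial order (i.e., the leading monomial of every maximal minor [a_1,...,a_m]_X with columns a_1 < ... < a_m is the product of its diagonal entries X_{1a_1}X_{2a_2}⋯X_{ma_m}). If μ and μ' are two distinct standard monomials on the poset Γ(m×n) of maximal minors (i.e., products of maximal minors along a chain in the componentwise order), then LM(μ_X) ≠ LM(μ'_X). -/

import Mathlib

/-!
The leading monomial of a product of maximal minors is the sum of their diagonal monomials.
Reading off the exponent of `X_{ij}` in that sum counts how often `j` occurs in row `i` of the
chain; since along a chain every row is weakly increasing, these counts determine each row as a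
sorted list, and hence the chain itself.
-/

open MvPolynomial

/-- `μ` is the leading monomial of `f` with respect to the strict monomial order `lt`. -/
def IsLeadMonWrt {K : Type*} [CommSemiring K] {σ : Type*}
    (lt : (σ →₀ ℕ) → (σ →₀ ℕ) → Prop)
    (f : MvPolynomial σ K) (μ : σ →₀ ℕ) : Prop :=
  μ ∈ f.support ∧ ∀ ν ∈ f.support, ν ≠ μ → lt ν μ

namespace IsLeadMonWrt

variable {K σ : Type*} [CommSemiring K] {lt : (σ →₀ ℕ) → (σ →₀ ℕ) → Prop}

theorem unique [Std.Asymm lt] {f : MvPolynomial σ K} {μ μ' : σ →₀ ℕ}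
    (h : IsLeadMonWrt lt f μ) (h' : IsLeadMonWrt lt f μ') : μ = μ' := by
  by_contra hne
  exact asymm (h'.2 μ h.1 hne) (h.2 μ' h'.1 (Ne.symm hne))

theorem one [Nontrivial K] : IsLeadMonWrt lt (1 : MvPolynomial σ K) 0 := by
  refine ⟨by simp [support_one], fun ν hν hne => ?_⟩
  rw [support_one, Finset.mem_singleton] at hν
  exact absurd hν hne

variable [IsStrictOrder (σ →₀ ℕ) lt]

theorem add_lt_add_of_mem_support {f g : MvPolynomial σ K} {μ ν α β : σ →₀ ℕ}
    (haddRight : ∀ a b c, lt a b → lt (a + c) (b + c))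
    (hf : IsLeadMonWrt lt f μ) (hg : IsLeadMonWrt lt g ν)
    (hα : α ∈ f.support) (hβ : β ∈ g.support) (hne : (α, β) ≠ (μ, ν)) :
    lt (α + β) (μ + ν) := by
  have haddLeft : ∀ a b c, lt a b → lt (c + a) (c + b) := fun a b c h => by
    simpa only [add_comm c] using haddRight a b c h
  by_cases hαμ : α = μ <;> by_cases hβν : β = ν
  · exact absurd (by rw [hαμ, hβν]) hne
  · rw [hαμ]; exact haddLeft _ _ _ (hg.2 β hβ hβν)
  · rw [hβν]; exact haddRight _ _ _ (hf.2 α hα hαμ)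
  · exact _root_.trans (haddRight _ _ β (hf.2 α hα hαμ)) (haddLeft _ _ μ (hg.2 β hβ hβν))

theorem mul [NoZeroDivisors K] [DecidableEq σ] {f g : MvPolynomial σ K} {μ ν : σ →₀ ℕ}
    (haddRight : ∀ a b c, lt a b → lt (a + c) (b + c))
    (hf : IsLeadMonWrt lt f μ) (hg : IsLeadMonWrt lt g ν) :
    IsLeadMonWrt lt (f * g) (μ + ν) := by
  have hcoeff : (f * g).coeff (μ + ν) = f.coeff μ * g.coeff ν := by
    rw [coeff_mul]
    refine Finset.sum_eq_single (μ, ν) (fun ⟨α, β⟩ hαβ hne => ?_) (by simp)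
    by_contra h0
    have hlt := add_lt_add_of_mem_support haddRight hf hg
      (mem_support_iff.mpr (left_ne_zero_of_mul h0)) (mem_support_iff.mpr (right_ne_zero_of_mul h0))
      hne
    rw [Finset.HasAntidiagonal.mem_antidiagonal.mp hαβ] at hlt
    exact irrefl _ hlt
  refine ⟨?_, fun ξ hξ hξne => ?_⟩
  · rw [mem_support_iff, hcoeff]
    exact mul_ne_zero (mem_support_iff.mp hf.1) (mem_support_iff.mp hg.1)
  · obtain ⟨α, hα, β, hβ, rfl⟩ := Finset.mem_add.mp (support_mul f g hξ)
    exact add_lt_add_of_mem_support haddRight hf hg hα hβ fun h => hξne (by cases h; rfl)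

theorem list_prod [NoZeroDivisors K] [Nontrivial K] [DecidableEq σ] {ι : Type*} {f : ι → MvPolynomial σ K}
    {μ : ι → σ →₀ ℕ} (haddRight : ∀ a b c, lt a b → lt (a + c) (b + c)) {L : List ι}
    (h : ∀ i ∈ L, IsLeadMonWrt lt (f i) (μ i)) :
    IsLeadMonWrt lt (L.map f).prod (L.map μ).sum := by
  induction L with
  | nil => exact one
  | cons i L ih =>
    simp only [List.map_cons, List.prod_cons, List.sum_cons]
    exact mul haddRight (h i List.mem_cons_self) (ih fun j hj => h j (List.mem_cons_of_mem i hj))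

end IsLeadMonWrt

section DiagMonomial

variable {ι β : Type*} [Fintype ι] [DecidableEq ι] [DecidableEq β]

/-- The exponent vector of `∏ i, X (i, a i)`, i.e. the indicator of the graph of `a`. -/
noncomputable def diagMonomial (a : ι → β) : ι × β →₀ ℕ :=
  ∑ i, Finsupp.single (i, a i) 1

theorem diagMonomial_apply (a : ι → β) (i : ι) (j : β) :
    diagMonomial a (i, j) = if a i = j then 1 else 0 := by
  rw [diagMonomial, Finsupp.finsetSum_apply, Finset.sum_eq_single i]
  · simp [Finsupp.single_apply]
  · intro i' _ hi'
    simp [hi']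
  · simp

theorem sum_map_diagMonomial_apply (L : List (ι → β)) (i : ι) (j : β) :
    (L.map diagMonomial).sum (i, j) = (L.map (· i)).count j := by
  induction L with
  | nil => simp
  | cons a L ih =>
    simp only [List.map_cons, List.sum_cons, List.count_cons, Finsupp.add_apply, ih,
      diagMonomial_apply, beq_iff_eq]
    split_ifs <;> omega

end DiagMonomial

theorem List.eq_of_map_eval_eq {ι β : Type*} [Nonempty ι] {L₁ L₂ : List (ι → β)}
    (h : ∀ i, L₁.map (· i) = L₂.map (· i)) : L₁ = L₂ := by
  have hlen : L₁.length = L₂.length := by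
    simpa using congrArg List.length (h (Classical.arbitrary ι))
  refine List.ext_getElem hlen fun k hk₁ hk₂ => funext fun i => ?_
  have hk := List.getElem_of_eq (h i) (by simpa using hk₁)
  rwa [List.getElem_map, List.getElem_map] at hk

theorem List.eq_of_sum_map_diagMonomial_eq {ι β : Type*} [Fintype ι] [DecidableEq ι]
    [Nonempty ι] [LinearOrder β] {L₁ L₂ : List (ι → β)}
    (h₁ : L₁.IsChain (· ≤ ·)) (h₂ : L₂.IsChain (· ≤ ·))
    (h : (L₁.map diagMonomial).sum = (L₂.map diagMonomial).sum) : L₁ = L₂ := by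
  have hrow_sorted : ∀ {L : List (ι → β)}, L.IsChain (· ≤ ·) → ∀ i,
      (L.map (· i)).Pairwise (· ≤ ·) := fun hL i => by
    rw [← List.isChain_iff_pairwise, List.isChain_map]
    exact hL.imp fun a b hab => hab i
  refine List.eq_of_map_eval_eq fun i => ?_
  refine List.Perm.eq_of_pairwise' (hrow_sorted h₁ i) (hrow_sorted h₂ i) ?_
  rw [List.perm_iff_count]
  intro j
  rw [← sum_map_diagMonomial_apply, ← sum_map_diagMonomial_apply, h]

theorem leadMon_standard_monomials_distinct (K : Type*) [Field K] (m n : ℕ)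
    (hm : 0 < m)
    (lt : ((Fin m × Fin n) →₀ ℕ) → ((Fin m × Fin n) →₀ ℕ) → Prop)
    (hirrefl : ∀ a, ¬ lt a a)
    (htrans : ∀ a b c, lt a b → lt b c → lt a c)
    (haddRight : ∀ a b c, lt a b → lt (a + c) (b + c))
    (hdiag : ∀ a : Fin m → Fin n, StrictMono a →
      IsLeadMonWrt lt
        ((Matrix.of fun i j : Fin m => (MvPolynomial.X (i, a j) :
            MvPolynomial (Fin m × Fin n) K)).det)
        (∑ i : Fin m, Finsupp.single (i, a i) 1))
    (L₁ L₂ : List (Fin m → Fin n))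
    (hL₁mono : ∀ a ∈ L₁, StrictMono a) (hL₂mono : ∀ a ∈ L₂, StrictMono a)
    (hL₁chain : L₁.Chain' fun a b => ∀ i, a i ≤ b i)
    (hL₂chain : L₂.Chain' fun a b => ∀ i, a i ≤ b i)
    (hne : L₁ ≠ L₂)
    (μ₁ μ₂ : (Fin m × Fin n) →₀ ℕ)
    (h₁ : IsLeadMonWrt lt
      ((L₁.map fun a => (Matrix.of fun i j : Fin m => (MvPolynomial.X (i, a j) :
          MvPolynomial (Fin m × Fin n) K)).det)).prod μ₁)
    (h₂ : IsLeadMonWrt lt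
      ((L₂.map fun a => (Matrix.of fun i j : Fin m => (MvPolynomial.X (i, a j) :
          MvPolynomial (Fin m × Fin n) K)).det)).prod μ₂) :
    μ₁ ≠ μ₂ := by
  have : IsStrictOrder _ lt := { irrefl := hirrefl, trans := htrans }
  have : Nonempty (Fin m) := ⟨⟨0, hm⟩⟩
  have hμ₁ : μ₁ = (L₁.map diagMonomial).sum :=
    h₁.unique (IsLeadMonWrt.list_prod haddRight fun a ha => hdiag a (hL₁mono a ha))
  have hμ₂ : μ₂ = (L₂.map diagMonomial).sum :=
    h₂.unique (IsLeadMonWrt.list_prod haddRight fun a ha => hdiag a (hL₂mono a ha))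
  rw [hμ₁, hμ₂]
  exact fun h => hne (List.eq_of_sum_map_diagMonomial_eq hL₁chain hL₂chain h)
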